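/- arXiv:1006.5892 — 2 statements merged into one kernel-verified Lean document; each statement's English description precedes it below -/
import Mathlib

section
/- (Rands, case s=1) Let D be a t-(v,k,λ) design with 1 < t ≤ k, and suppose v ≥ 1 + C(k,1)·k·(k−1) = 1 + k²(k−1). If A is a family of blocks of D such that every two blocks in A intersect, then |A| ≤ r (the replication number), and equality holds only if A consists of all blocks through a single point. -/
/-!
Counting flags shows that every pair of distinct points lies in the same number `μ` of blocks,
and then `r (k - 1) = (v - 1) μ`, so the bound on `v` gives `k² μ ≤ r`. A family with a common
point lies in the star of all blocks through it, of size `r`. Otherwise fix `b₀ ∈ A`: every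
`x ∈ b₀` is missed by some `a ∈ A`, and each member of `A` through `x` meets `a` in a second
point, so `x` lies in at most `k μ` members of `A`. Counting incidences with `b₀` then yields
`|A| + k ≤ k² μ + 1 ≤ r + 1`, so `|A| < r` as `k ≥ 2`.
-/

open Finset

section Design

variable {α : Type*} [DecidableEq α] [Fintype α] {B : Finset (Finset α)} {k t lam : ℕ}

theorem card_filter_superset_mul_choose (hk : ∀ b ∈ B, #b = k)
    (hl : ∀ T : Finset α, #T = t → #{b ∈ B | T ⊆ b} = lam) {S : Finset α} (hS : #S ≤ t) :
    #{b ∈ B | S ⊆ b} * (k - #S).choose (t - #S) =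
      lam * (Fintype.card α - #S).choose (t - #S) := by
  have hcount := card_mul_eq_card_mul (fun b U : Finset α => U ⊆ b)
    (s := {b ∈ B | S ⊆ b}) (t := (univ \ S).powersetCard (t - #S)) (m := (k - #S).choose (t - #S)) (n := lam)
    (fun b hb => by
      rw [mem_filter] at hb
      have hsets : ((univ \ S).powersetCard (t - #S)).bipartiteAbove (fun b U : Finset α => U ⊆ b) b =
          (b \ S).powersetCard (t - #S) := by
        ext U
        simp only [bipartiteAbove, mem_filter, mem_powersetCard, subset_sdiff, subset_univ,
          true_and]
        tauto
      rw [hsets, card_powersetCard, card_sdiff_of_subset hb.2, hk b hb.1])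
    (fun U hU => by
      obtain ⟨hUS, hUcard⟩ := mem_powersetCard.1 hU
      have hdisj := (subset_sdiff.1 hUS).2
      simp only [bipartiteBelow, filter_filter, ← union_subset_iff]
      exact hl _ (by rw [card_union_of_disjoint hdisj.symm]; omega))
  rwa [card_powersetCard, card_sdiff_of_subset (subset_univ _), card_univ, mul_comm _ lam]
    at hcount

theorem card_filter_pair_eq (hk : ∀ b ∈ B, #b = k)
    (hl : ∀ T : Finset α, #T = t → #{b ∈ B | T ⊆ b} = lam) (ht : 2 ≤ t) (htk : t ≤ k)
    {x y x' y' : α} (hxy : x ≠ y) (hxy' : x' ≠ y') :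
    #{b ∈ B | x ∈ b ∧ y ∈ b} = #{b ∈ B | x' ∈ b ∧ y' ∈ b} := by
  have hpair : ∀ x y : α, x ≠ y → #{b ∈ B | x ∈ b ∧ y ∈ b} * (k - 2).choose (t - 2) =
      lam * (Fintype.card α - 2).choose (t - 2) := by
    intro x y hxy
    simpa only [insert_subset_iff, singleton_subset_iff, card_pair hxy] using
      card_filter_superset_mul_choose hk hl (S := {x, y}) (by rw [card_pair hxy]; exact ht)
  exact Nat.eq_of_mul_eq_mul_right (Nat.choose_pos (by omega))
    ((hpair x y hxy).trans (hpair x' y' hxy').symm)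

theorem card_filter_mem_mul_eq {μ : ℕ} (hk : ∀ b ∈ B, #b = k)
    (hμ : ∀ x y : α, x ≠ y → #{b ∈ B | x ∈ b ∧ y ∈ b} = μ) (x : α) :
    #{b ∈ B | x ∈ b} * (k - 1) = (Fintype.card α - 1) * μ := by
  have hcount := sum_card_inter (s := univ.erase x) (B := {b ∈ B | x ∈ b}) (n := μ)
    fun y hy => by
      simpa only [filter_filter] using hμ x y (ne_of_mem_erase hy).symm
  rwa [sum_congr rfl (g := fun _ => k - 1), sum_const, smul_eq_mul,
    card_erase_of_mem (mem_univ x), card_univ] at hcount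
  intro b hb
  rw [mem_filter] at hb
  rw [erase_inter, univ_inter, card_erase_of_mem hb.2, hk b hb.1]

end Design

section Intersecting

variable {α : Type*} [DecidableEq α] {A B : Finset (Finset α)} {k μ : ℕ}

theorem card_add_card_le_sum_card_inter {b₀ : Finset α} (hb₀ : b₀ ∈ A)
    (hint : ∀ a ∈ A, (b₀ ∩ a).Nonempty) : #A + #b₀ ≤ ∑ a ∈ A, #(b₀ ∩ a) + 1 := by
  have hrest : #(A.erase b₀) ≤ ∑ a ∈ A.erase b₀, #(b₀ ∩ a) := by
    simpa using card_nsmul_le_sum (A.erase b₀) (fun a => #(b₀ ∩ a)) 1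
      fun a ha => (hint a (mem_of_mem_erase ha)).card_pos
  rw [card_erase_of_mem hb₀] at hrest
  rw [← add_sum_erase A _ hb₀, inter_self]
  have := card_pos.2 ⟨b₀, hb₀⟩
  omega

theorem card_filter_mem_le_of_notMem (hAB : A ⊆ B)
    (hμ : ∀ x y : α, x ≠ y → #{b ∈ B | x ∈ b ∧ y ∈ b} = μ)
    (hint : ∀ a ∈ A, ∀ b ∈ A, (a ∩ b).Nonempty) {a₀ : Finset α} (ha₀ : a₀ ∈ A) {x : α}
    (hx : x ∉ a₀) : #{a ∈ A | x ∈ a} ≤ #a₀ * μ := by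
  have hcover : {a ∈ A | x ∈ a} ⊆ a₀.biUnion fun y => {b ∈ B | x ∈ b ∧ y ∈ b} := by
    intro a ha
    obtain ⟨haA, hxa⟩ := mem_filter.1 ha
    obtain ⟨y, hy⟩ := hint a haA a₀ ha₀
    obtain ⟨hya, hya₀⟩ := mem_inter.1 hy
    exact mem_biUnion.2 ⟨y, hya₀, mem_filter.2 ⟨hAB haA, hxa, hya⟩⟩
  calc #{a ∈ A | x ∈ a}
      ≤ ∑ y ∈ a₀, #{b ∈ B | x ∈ b ∧ y ∈ b} := (card_le_card hcover).trans card_biUnion_le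
    _ = #a₀ * μ := by
      rw [sum_congr rfl fun y hy => hμ x y fun h => hx (h ▸ hy), sum_const, smul_eq_mul]

theorem card_add_le_of_forall_exists_notMem [Nonempty α] (hAB : A ⊆ B)
    (hk : ∀ b ∈ B, #b = k) (hμ : ∀ x y : α, x ≠ y → #{b ∈ B | x ∈ b ∧ y ∈ b} = μ)
    (hint : ∀ a ∈ A, ∀ b ∈ A, (a ∩ b).Nonempty) (hfree : ∀ x : α, ∃ a ∈ A, x ∉ a) :
    #A + k ≤ k ^ 2 * μ + 1 := by
  obtain ⟨b₀, hb₀, -⟩ := hfree (Classical.arbitrary α)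
  have hb₀k := hk b₀ (hAB hb₀)
  have hdeg : ∀ x ∈ b₀, #{a ∈ A | x ∈ a} ≤ k * μ := fun x _ => by
    obtain ⟨a₀, ha₀, hx⟩ := hfree x
    rw [← hk a₀ (hAB ha₀)]
    exact card_filter_mem_le_of_notMem hAB hμ hint ha₀ hx
  calc #A + k ≤ ∑ a ∈ A, #(b₀ ∩ a) + 1 := by
        simpa only [hb₀k] using card_add_card_le_sum_card_inter hb₀ (hint b₀ hb₀)
    _ ≤ #b₀ * (k * μ) + 1 := by gcongr; exact sum_card_inter_le hdeg
    _ = k ^ 2 * μ + 1 := by rw [hb₀k]; ring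

end Intersecting

/-- Rands, case s = 1: in a t-(v,k,λ) design with 1 < t ≤ k and
v ≥ 1 + k²(k−1), any pairwise-intersecting family of blocks has size at most r,
with equality only for the family of all blocks through a single point. -/
theorem rands_s_one {α : Type*} [Fintype α] [DecidableEq α]
    (v k t lam r : ℕ) (B : Finset (Finset α))
    (hv : Fintype.card α = v)
    (ht : 1 < t) (htk : t ≤ k)
    (hk : ∀ b ∈ B, b.card = k)
    (hl : ∀ T : Finset α, T.card = t → (B.filter (fun b => T ⊆ b)).card = lam)
    (hr : ∀ x : α, (B.filter (fun b => x ∈ b)).card = r)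
    (hbig : v ≥ 1 + k ^ 2 * (k - 1))
    (A : Finset (Finset α)) (hA : A ⊆ B)
    (hint : ∀ a ∈ A, ∀ b ∈ A, (a ∩ b).Nonempty) :
    A.card ≤ r ∧ (A.card = r → ∃ x : α, A = B.filter (fun b => x ∈ b)) := by
  have hk1 : 1 ≤ k - 1 := by omega
  have hv2 : 1 < Fintype.card α := by
    have : 1 ≤ k ^ 2 * (k - 1) := Nat.mul_pos (pow_pos (by omega) 2) hk1
    omega
  obtain ⟨x₀, y₀, hxy₀⟩ := Fintype.exists_pair_of_one_lt_card hv2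
  set μ := #{b ∈ B | x₀ ∈ b ∧ y₀ ∈ b}
  have hμ : ∀ x y : α, x ≠ y → #{b ∈ B | x ∈ b ∧ y ∈ b} = μ := fun x y hxy =>
    card_filter_pair_eq hk hl ht htk hxy hxy₀
  have hμr : k ^ 2 * μ ≤ r := by
    refine Nat.le_of_mul_le_mul_right ?_ hk1
    calc k ^ 2 * μ * (k - 1) = k ^ 2 * (k - 1) * μ := by ring
      _ ≤ (v - 1) * μ := by gcongr; omega
      _ = r * (k - 1) := by rw [← hv, ← card_filter_mem_mul_eq hk hμ x₀, hr]
  by_cases hstar : ∃ x, ∀ a ∈ A, x ∈ a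
  · obtain ⟨x, hx⟩ := hstar
    have hsub : A ⊆ {b ∈ B | x ∈ b} := fun a ha => mem_filter.2 ⟨hA ha, hx a ha⟩
    refine ⟨hr x ▸ card_le_card hsub, fun hAr => ⟨x, eq_of_subset_of_card_le hsub ?_⟩⟩
    rw [hr, hAr]
  · push Not at hstar
    have : Nonempty α := ⟨x₀⟩
    have := card_add_le_of_forall_exists_notMem hA hk hμ hint hstar
    omega
end

section
/- The line graph of a 2-(v,k,1) design with v > k(k−1)+1 is strongly regular: it is regular, every pair of adjacent vertices has the same number of common neighbors, and every pair of non-adjacent vertices has the same number of common neighbors. -/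
/-- The line graph of a family of blocks: vertices are blocks, two distinct
blocks adjacent iff they share a point. -/
def lineGraph {α : Type*} [DecidableEq α] (B : Finset (Finset α)) :
    SimpleGraph {b // b ∈ B} where
  Adj a b := a ≠ b ∧ (a.1 ∩ b.1).Nonempty
  symm := ⟨fun a b h => ⟨h.1.symm, by rw [Finset.inter_comm]; exact h.2⟩⟩
  loopless := ⟨fun a h => h.1 rfl⟩

/-!
Counting pairs (block through `x`, other point of that block) shows that every point lies on
`r = (v - 1) / (k - 1)` blocks, and two distinct blocks meet in at most one point. Hence a block
meets `k (r - 1)` others. The common neighbours of two blocks `a`, `b` that avoid `a ∩ b`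
correspond to the pairs `(y, z) ∈ (a \ b) × (b \ a)`, through the block joining `y` and `z`;
when `a` and `b` meet in a point `x`, the other common neighbours are the `r - 2` further blocks
through `x`. This gives the parameters `(k (r - 1), r - 2 + (k - 1)², k²)`.
-/

open Finset

def IsLinearSpace {α : Type*} [DecidableEq α] (B : Finset (Finset α)) : Prop :=
  ∀ x y : α, x ≠ y → #{b ∈ B | x ∈ b ∧ y ∈ b} = 1

namespace IsLinearSpace

variable {α : Type*} [DecidableEq α] {B : Finset (Finset α)} {a b : Finset α} {x y : α}

theorem eq_of_mem_of_mem (hB : IsLinearSpace B) (hxy : x ≠ y) (ha : a ∈ B) (hb : b ∈ B)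
    (hxa : x ∈ a) (hya : y ∈ a) (hxb : x ∈ b) (hyb : y ∈ b) : a = b :=
  card_le_one.mp (hB x y hxy).le a (by simp [ha, hxa, hya]) b (by simp [hb, hxb, hyb])

theorem card_inter_eq_one (hB : IsLinearSpace B) (ha : a ∈ B) (hb : b ∈ B) (hab : a ≠ b)
    (h : (a ∩ b).Nonempty) : #(a ∩ b) = 1 := by
  obtain ⟨x, hx⟩ := h
  refine card_eq_one.mpr ⟨x, eq_singleton_iff_unique_mem.mpr ⟨hx, fun y hy => ?_⟩⟩
  rw [mem_inter] at hx hy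
  by_contra hyx
  exact hab (hB.eq_of_mem_of_mem hyx ha hb hy.1 hx.1 hy.2 hx.2)

theorem card_filter_mem_mul_sub_one [Fintype α] {k : ℕ} (hB : IsLinearSpace B)
    (hk : ∀ b ∈ B, #b = k) (x : α) :
    #{b ∈ B | x ∈ b} * (k - 1) = Fintype.card α - 1 := by
  have := card_mul_eq_card_mul (s := {b ∈ B | x ∈ b}) (t := univ.erase x) (fun b y => y ∈ b)
    (m := k - 1) (n := 1) ?_ ?_
  · simpa [card_erase_of_mem] using this
  · intro b hb
    rw [mem_filter] at hb
    have : (univ.erase x).bipartiteAbove (fun b y => y ∈ b) b = b.erase x := by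
      ext; simp [bipartiteAbove, and_comm]
    rw [this, card_erase_of_mem hb.2, hk b hb.1]
  · intro y hy
    rw [← hB x y (ne_of_mem_erase hy).symm]
    simp only [bipartiteBelow, filter_filter]

theorem card_filter_mem [Fintype α] {k : ℕ} (hB : IsLinearSpace B) (hk : ∀ b ∈ B, #b = k)
    (hk2 : 2 ≤ k) (x : α) : #{b ∈ B | x ∈ b} = (Fintype.card α - 1) / (k - 1) :=
  Nat.eq_div_of_mul_eq_left (by omega) (hB.card_filter_mem_mul_sub_one hk x)

theorem card_blocks_meeting {k r : ℕ} (hB : IsLinearSpace B) (hk : ∀ b ∈ B, #b = k)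
    (hr : ∀ x, #{b ∈ B | x ∈ b} = r) (ha : a ∈ B) :
    #{c ∈ B | c ≠ a ∧ (a ∩ c).Nonempty} = k * (r - 1) := by
  have := card_mul_eq_card_mul (s := {c ∈ B | c ≠ a ∧ (a ∩ c).Nonempty}) (t := a)
    (fun c x => x ∈ c) (m := 1) (n := r - 1) ?_ ?_
  · rwa [mul_one, hk a ha] at this
  · intro c hc
    rw [mem_filter] at hc
    exact hB.card_inter_eq_one ha hc.1 hc.2.1.symm hc.2.2
  · intro x hx
    have : {c ∈ B | c ≠ a ∧ (a ∩ c).Nonempty}.bipartiteBelow (fun c x => x ∈ c) x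
        = {c ∈ B | x ∈ c}.erase a := by
      ext c
      simp only [bipartiteBelow, mem_filter, mem_erase]
      exact ⟨fun hc => ⟨hc.1.2.1, hc.1.1, hc.2⟩,
        fun hc => ⟨⟨hc.2.1, hc.1, x, mem_inter.mpr ⟨hx, hc.2.2⟩⟩, hc.2.2⟩⟩
    rw [this, card_erase_of_mem (mem_filter.mpr ⟨ha, hx⟩), hr]

theorem card_blocks_meeting_both_disjoint_inter (hB : IsLinearSpace B) (ha : a ∈ B)
    (hb : b ∈ B) :
    #{c ∈ B | c ≠ a ∧ c ≠ b ∧ (a ∩ c).Nonempty ∧ (b ∩ c).Nonempty ∧ Disjoint (a ∩ b) c}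
      = #(a \ b) * #(b \ a) := by
  have := card_mul_eq_card_mul
    (s := {c ∈ B | c ≠ a ∧ c ≠ b ∧ (a ∩ c).Nonempty ∧ (b ∩ c).Nonempty ∧ Disjoint (a ∩ b) c})
    (t := (a \ b) ×ˢ (b \ a)) (fun c p => p.1 ∈ c ∧ p.2 ∈ c) (m := 1) (n := 1) ?_ ?_
  · rwa [mul_one, mul_one, card_product] at this
  · intro c hc
    rw [mem_filter] at hc
    obtain ⟨hcB, hca, hcb, hac, hbc, hdisj⟩ := hc
    have : ((a \ b) ×ˢ (b \ a)).bipartiteAbove (fun c p => p.1 ∈ c ∧ p.2 ∈ c) c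
        = (a ∩ c) ×ˢ (b ∩ c) := by
      ext ⟨y, z⟩
      have := disjoint_left.mp hdisj
      simp only [bipartiteAbove, mem_filter, mem_product, mem_sdiff, mem_inter] at this ⊢
      grind
    rw [this, card_product, hB.card_inter_eq_one ha hcB hca.symm hac,
      hB.card_inter_eq_one hb hcB hcb.symm hbc]
  · rintro ⟨y, z⟩ hp
    simp only [mem_product, mem_sdiff] at hp
    obtain ⟨⟨hya, hyb⟩, hzb, hza⟩ := hp
    rw [← hB y z (by grind)]
    congr 1
    ext c
    simp only [bipartiteBelow, mem_filter]
    refine ⟨fun h => ⟨h.1.1, h.2⟩, fun ⟨hcB, hyc, hzc⟩ => ⟨⟨hcB, ?_, ?_,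
      ⟨y, mem_inter.mpr ⟨hya, hyc⟩⟩, ⟨z, mem_inter.mpr ⟨hzb, hzc⟩⟩, ?_⟩, hyc, hzc⟩⟩
    · rintro rfl; exact hza hzc
    · rintro rfl; exact hyb hyc
    · rw [disjoint_left]
      intro w hw hwc
      rw [mem_inter] at hw
      have hwy : w ≠ y := by rintro rfl; exact hyb hw.2
      exact hza (hB.eq_of_mem_of_mem hwy hcB ha hwc hyc hw.1 hya ▸ hzc)

theorem card_blocks_meeting_both_of_inter_eq_empty {k : ℕ} (hB : IsLinearSpace B)
    (hk : ∀ b ∈ B, #b = k) (ha : a ∈ B) (hb : b ∈ B) (h : a ∩ b = ∅) :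
    #{c ∈ B | c ≠ a ∧ c ≠ b ∧ (a ∩ c).Nonempty ∧ (b ∩ c).Nonempty} = k * k := by
  have hab := card_sdiff_add_card_inter a b
  have hba := card_sdiff_add_card_inter b a
  rw [inter_comm] at hba
  rw [h, card_empty, add_zero, hk a ha] at hab
  rw [h, card_empty, add_zero, hk b hb] at hba
  rw [show k * k = #(a \ b) * #(b \ a) by rw [hab, hba],
    ← hB.card_blocks_meeting_both_disjoint_inter ha hb]
  simp [h]

theorem card_blocks_meeting_both_of_inter_nonempty {k r : ℕ} (hB : IsLinearSpace B)
    (hk : ∀ b ∈ B, #b = k) (hr : ∀ x, #{b ∈ B | x ∈ b} = r)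
    (ha : a ∈ B) (hb : b ∈ B) (hne : a ≠ b) (hmeet : (a ∩ b).Nonempty) :
    #{c ∈ B | c ≠ a ∧ c ≠ b ∧ (a ∩ c).Nonempty ∧ (b ∩ c).Nonempty}
      = (r - 2) + (k - 1) * (k - 1) := by
  obtain ⟨x, h⟩ := card_eq_one.mp (hB.card_inter_eq_one ha hb hne hmeet)
  have hxa : x ∈ a := mem_of_mem_inter_left (h ▸ mem_singleton_self x)
  have hxb : x ∈ b := mem_of_mem_inter_right (h ▸ mem_singleton_self x)
  have through : {c ∈ {c ∈ B | c ≠ a ∧ c ≠ b ∧ (a ∩ c).Nonempty ∧ (b ∩ c).Nonempty} | x ∈ c}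
      = ({c ∈ B | x ∈ c}.erase a).erase b := by
    ext c
    simp only [mem_filter, mem_erase]
    exact ⟨fun hc => ⟨hc.1.2.2.1, hc.1.2.1, hc.1.1, hc.2⟩, fun hc => ⟨⟨hc.2.2.1, hc.2.1, hc.1,
      ⟨x, mem_inter.mpr ⟨hxa, hc.2.2.2⟩⟩, ⟨x, mem_inter.mpr ⟨hxb, hc.2.2.2⟩⟩⟩, hc.2.2.2⟩⟩
  have avoiding : {c ∈ {c ∈ B | c ≠ a ∧ c ≠ b ∧ (a ∩ c).Nonempty ∧ (b ∩ c).Nonempty} | x ∉ c}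
      = {c ∈ B | c ≠ a ∧ c ≠ b ∧ (a ∩ c).Nonempty ∧ (b ∩ c).Nonempty ∧ Disjoint (a ∩ b) c} := by
    ext c
    simp only [mem_filter, h, disjoint_singleton_left]
    tauto
  have hab : #(a \ b) = k - 1 := by
    have := card_sdiff_add_card_inter a b
    rw [h, card_singleton, hk a ha] at this
    omega
  have hba : #(b \ a) = k - 1 := by
    have := card_sdiff_add_card_inter b a
    rw [inter_comm, h, card_singleton, hk b hb] at this
    omega
  rw [← card_filter_add_card_filter_not (x ∈ ·), through, avoiding,
    hB.card_blocks_meeting_both_disjoint_inter ha hb, hab, hba,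
    card_erase_of_mem (mem_erase.mpr ⟨hne.symm, mem_filter.mpr ⟨hb, hxb⟩⟩),
    card_erase_of_mem (mem_filter.mpr ⟨ha, hxa⟩), hr]
  omega

end IsLinearSpace

section LineGraph

variable {α : Type*} [DecidableEq α] {B : Finset (Finset α)}

theorem Finset.natCard_setOf_val_eq_card_filter {β : Type*} (s : Finset β) (p : β → Prop)
    [DecidablePred p] :
    Nat.card {c : s | p c} = #{b ∈ s | p b} := by
  rw [← Nat.card_eq_finsetCard]
  exact Nat.card_congr ((Equiv.subtypeSubtypeEquivSubtypeInter _ p).trans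
    (Equiv.subtypeEquivRight fun _ => mem_filter.symm))

theorem lineGraph_adj_iff {a c : {b // b ∈ B}} :
    (lineGraph B).Adj a c ↔ c.1 ≠ a.1 ∧ (a.1 ∩ c.1).Nonempty :=
  and_congr_left' (Subtype.coe_ne_coe.symm.trans ne_comm)

theorem natCard_lineGraph_adj (a : {b // b ∈ B}) :
    Nat.card {c | (lineGraph B).Adj a c} = #{c ∈ B | c ≠ a.1 ∧ (a.1 ∩ c).Nonempty} := by
  simp_rw [lineGraph_adj_iff]
  exact natCard_setOf_val_eq_card_filter B (fun c => c ≠ a.1 ∧ (a.1 ∩ c).Nonempty)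

theorem natCard_lineGraph_common (a b : {b // b ∈ B}) :
    Nat.card {c | (lineGraph B).Adj a c ∧ (lineGraph B).Adj b c}
      = #{c ∈ B | c ≠ a.1 ∧ c ≠ b.1 ∧ (a.1 ∩ c).Nonempty ∧ (b.1 ∩ c).Nonempty} := by
  simp_rw [lineGraph_adj_iff, and_and_and_comm, and_assoc]
  exact natCard_setOf_val_eq_card_filter B
    (fun c => c ≠ a.1 ∧ c ≠ b.1 ∧ (a.1 ∩ c).Nonempty ∧ (b.1 ∩ c).Nonempty)

end LineGraph

theorem line_graph_strongly_regular_general {α : Type*} [Fintype α] [DecidableEq α]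
    (k : ℕ) (B : Finset (Finset α))
    (htk : 2 ≤ k)
    (hk : ∀ b ∈ B, b.card = k)
    (hl : ∀ x y : α, x ≠ y → (B.filter (fun b => x ∈ b ∧ y ∈ b)).card = 1) :
    ∃ d l m : ℕ,
      (∀ a : {b // b ∈ B}, Nat.card {c | (lineGraph B).Adj a c} = d) ∧
      (∀ a b : {b // b ∈ B}, (lineGraph B).Adj a b →
        Nat.card {c | (lineGraph B).Adj a c ∧ (lineGraph B).Adj b c} = l) ∧
      (∀ a b : {b // b ∈ B}, a ≠ b → ¬ (lineGraph B).Adj a b →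
        Nat.card {c | (lineGraph B).Adj a c ∧ (lineGraph B).Adj b c} = m) := by
  have hB : IsLinearSpace B := hl
  set r := (Fintype.card α - 1) / (k - 1)
  have hr : ∀ x, #{b ∈ B | x ∈ b} = r := hB.card_filter_mem hk htk
  refine ⟨k * (r - 1), r - 2 + (k - 1) * (k - 1), k * k,
    fun a => ?_, fun a b hadj => ?_, fun a b hne hnadj => ?_⟩
  · rw [natCard_lineGraph_adj]
    exact hB.card_blocks_meeting hk hr a.2
  · rw [natCard_lineGraph_common]
    exact hB.card_blocks_meeting_both_of_inter_nonempty hk hr a.2 b.2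
      (Subtype.coe_ne_coe.mpr hadj.1) hadj.2
  · have hdisj : a.1 ∩ b.1 = ∅ := not_nonempty_iff_eq_empty.mp fun hmeet => hnadj ⟨hne, hmeet⟩
    rw [natCard_lineGraph_common]
    exact hB.card_blocks_meeting_both_of_inter_eq_empty hk a.2 b.2 hdisj

/-- the line graph of a 2-(v,k,1) design with v > k(k−1)+1 is
strongly regular. -/
theorem line_graph_strongly_regular {α : Type*} [Fintype α] [DecidableEq α]
    (v k : ℕ) (B : Finset (Finset α))
    (hv : Fintype.card α = v)
    (htk : 2 ≤ k)
    (hk : ∀ b ∈ B, b.card = k)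
    (hl : ∀ x y : α, x ≠ y → (B.filter (fun b => x ∈ b ∧ y ∈ b)).card = 1)
    (hbig : v > k * (k - 1) + 1) :
    ∃ d l m : ℕ,
      (∀ a : {b // b ∈ B}, Nat.card {c | (lineGraph B).Adj a c} = d) ∧
      (∀ a b : {b // b ∈ B}, (lineGraph B).Adj a b →
        Nat.card {c | (lineGraph B).Adj a c ∧ (lineGraph B).Adj b c} = l) ∧
      (∀ a b : {b // b ∈ B}, a ≠ b → ¬ (lineGraph B).Adj a b →
        Nat.card {c | (lineGraph B).Adj a c ∧ (lineGraph B).Adj b c} = m) :=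
  line_graph_strongly_regular_general k B htk hk hl
end
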